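/- arXiv:2207.06005 — 4 statements merged into one kernel-verified Lean document; each statement's English description precedes it below -/
import Mathlib

section
/- Let q ≥ 0 be an integer, let G and H be groups, and let A ≤ E^∧_q(G) and B ≤ E^∧_q(H) be subgroups. If G/A ≅ H/B, then G∧^q G ≅ H∧^q H. -/
/-!
Nonabelian tensor square modulo `q` (Conduché–Ellis / Brown–Loday for `q = 0`),
presented by generators `g ⊗ h` and `{(g,g)}` with the defining relations.
-/

namespace QTensor

/-- Generators of the `q`-tensor square: `t g h` stands for `g ⊗ h`,
and `d g` stands for the symbol `{(g,g)}`. -/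
inductive Gen (G : Type) : Type
  | t : G → G → Gen G
  | d : G → Gen G

variable (G : Type) [Group G]

/-- The word `g ⊗ h` in the free group on the generators. -/
def T (g h : G) : FreeGroup (Gen G) := FreeGroup.of (Gen.t g h)

/-- The word `{(g,g)}` in the free group on the generators. -/
def D (g : G) : FreeGroup (Gen G) := FreeGroup.of (Gen.d g)

/-- The word `∏_{i=1}^{q-1} (g⁻¹ ⊗ (^(g^(1-q+i)) g₁)^i)` appearing in relation (4). -/
def relProd (q : ℕ) (g g₁ : G) : FreeGroup (Gen G) :=
  ((List.range (q - 1)).map (fun j =>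
    T G g⁻¹ ((g ^ ((1 : ℤ) - (q : ℤ) + (j + 1 : ℕ)) * g₁ *
      (g ^ ((1 : ℤ) - (q : ℤ) + (j + 1 : ℕ)))⁻¹) ^ (j + 1)))).prod

/-- The defining relations of the `q`-tensor square.  For `q = 0` the symbols
`{(g,g)}` are killed, so that the group is the Brown–Loday nonabelian tensor
square generated by the `g ⊗ h` subject to relations (1) and (2). -/
def rels (q : ℕ) : Set (FreeGroup (Gen G)) :=
  {r | ∃ g g₁ h : G,
      r = T G (g * g₁) h * (T G (g * g₁ * g⁻¹) (g * h * g⁻¹) * T G g h)⁻¹} ∪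
  {r | ∃ g h h₁ : G,
      r = T G g (h * h₁) * (T G g h * T G (h * g * h⁻¹) (h * h₁ * h⁻¹))⁻¹} ∪
  {r | ∃ g g₁ h₁ : G,
      r = D G g * T G g₁ h₁ * (D G g)⁻¹ *
        (T G (g ^ q * g₁ * (g ^ q)⁻¹) (g ^ q * h₁ * (g ^ q)⁻¹))⁻¹} ∪
  {r | ∃ g g₁ : G,
      r = D G (g * g₁) * (D G g * relProd G q g g₁ * D G g₁)⁻¹} ∪
  {r | ∃ g g₁ : G,
      r = D G g * D G g₁ * (D G g)⁻¹ * (D G g₁)⁻¹ * (T G (g ^ q) (g₁ ^ q))⁻¹} ∪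
  {r | ∃ g h : G,
      r = D G (g * h * g⁻¹ * h⁻¹) * ((T G g h) ^ q)⁻¹} ∪
  {r | q = 0 ∧ ∃ g : G, r = D G g}

/-- The nonabelian tensor square modulo `q`, `G ⊗^q G`. -/
def tensorSquare (q : ℕ) : Type := PresentedGroup (rels G q)

instance (q : ℕ) : Group (tensorSquare G q) := by unfold tensorSquare; infer_instance

/-- The element `g ⊗ h` of `G ⊗^q G`. -/
def tmk (q : ℕ) (g h : G) : tensorSquare G q := PresentedGroup.of (Gen.t g h)

/-- The element `{(g,g)}` of `G ⊗^q G`. -/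
def dmk (q : ℕ) (g : G) : tensorSquare G q := PresentedGroup.of (Gen.d g)

/-- `∇^q(G)`, the normal closure of the elements `g ⊗ g` in `G ⊗^q G`. -/
def nabla (q : ℕ) : Subgroup (tensorSquare G q) :=
  Subgroup.normalClosure {x | ∃ g : G, x = tmk G q g g}

instance (q : ℕ) : (nabla G q).Normal := Subgroup.normalClosure_normal

/-- The exterior square modulo `q`, `G ∧^q G = (G ⊗^q G)/∇^q(G)`. -/
def extSquare (q : ℕ) : Type := tensorSquare G q ⧸ nabla G q

instance (q : ℕ) : Group (extSquare G q) := by unfold extSquare; infer_instance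

/-- The element `g ∧ h` of `G ∧^q G`. -/
def wmk (q : ℕ) (g h : G) : extSquare G q := QuotientGroup.mk (tmk G q g h)

/-- The image of the symbol `{(g,g)}` in `G ∧^q G`. -/
def dwmk (q : ℕ) (g : G) : extSquare G q := QuotientGroup.mk (dmk G q g)

/-- The exterior centre variant `Z^∧_q(G) = {g : g ∧ h = 1 for all h}` (as a set). -/
def Zext (q : ℕ) : Set G := {g | ∀ h : G, wmk G q g h = 1}

/-- `E^∧_q(G) = {g ∈ Z^∧_q(G) : {(g,g)} = 1 in G ∧^q G}` (as a set); for `q = 0`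
the second condition is automatic, so `E^∧_0(G) = Z^∧(G)`. -/
def Eext (q : ℕ) : Set G := {g | (∀ h : G, wmk G q g h = 1) ∧ dwmk G q g = 1}

/-- The subgroup `G^q[G,G]` generated by all `q`-th powers and all commutators. -/
def qPowComm (q : ℕ) : Subgroup G :=
  Subgroup.closure ({x | ∃ g : G, x = g ^ q} ∪ {x | ∃ a b : G, x = a * b * a⁻¹ * b⁻¹})

theorem pow_mem_qPowComm (q : ℕ) (g : G) : g ^ q ∈ qPowComm G q :=
  Subgroup.subset_closure (Or.inl ⟨g, rfl⟩)

theorem commutator_mem_qPowComm (q : ℕ) (a b : G) :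
    a * b * a⁻¹ * b⁻¹ ∈ qPowComm G q :=
  Subgroup.subset_closure (Or.inr ⟨a, b, rfl⟩)

open scoped commutatorElement in
theorem mem_commutator (a b : G) : ⁅a, b⁆ ∈ commutator G :=
  Subgroup.commutator_mem_commutator (Subgroup.mem_top a) (Subgroup.mem_top b)

/-- `M₀^q(G)`: the subgroup of `G ∧^q G` generated by the `x ∧ y` with `[x,y] = 1`.
(It is contained in the `q`-Schur multiplier `M^q(G)`.) -/
def M0 (q : ℕ) : Subgroup (extSquare G q) :=
  Subgroup.closure {x | ∃ a b : G, a * b = b * a ∧ x = wmk G q a b}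

/-- `M̂₀^q(G)`: the subgroup of `G ∧^q G` generated by the `x ∧ y` with `[x,y] = 1`
together with the `{(g,g)}` with `g^q = 1`. -/
def M0hat (q : ℕ) : Subgroup (extSquare G q) :=
  Subgroup.closure
    ({x | ∃ a b : G, a * b = b * a ∧ x = wmk G q a b} ∪
     {x | ∃ g : G, g ^ q = 1 ∧ x = dwmk G q g})

/-- A group `Q` is capable if `Q ≅ E/Z(E)` for some group `E`. -/
def Capable (Q : Type) [Group Q] : Prop :=
  ∃ (E : Type) (_ : Group E), Nonempty (Q ≃* E ⧸ Subgroup.center E)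

end QTensor

/-!
Elements of `E^∧_q(G)` are invisible to the generators of `G ∧^q G`: for `a` in a normal
subgroup `A ⊆ E^∧_q(G)`, `g ∧ h` and `{(g,g)}` only depend on the cosets `gA`, `hA`. Hence the
defining relations of `(G/A) ∧^q (G/A)` hold for these coset-indexed elements of `G ∧^q G`,
which gives an inverse to the map induced by `G → G/A`. Thus
`G ∧^q G ≅ (G/A) ∧^q (G/A) ≅ (H/B) ∧^q (H/B) ≅ H ∧^q H`.
-/

namespace QTensor

variable {G H : Type} {K : Type*} [Group K]

def genMap (w : G → G → K) (d : G → K) : Gen G → K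
  | .t g h => w g h
  | .d g => d g

@[simp] lemma lift_genMap_T (w : G → G → K) (d : G → K) (g h : G) :
    FreeGroup.lift (genMap w d) (T G g h) = w g h := FreeGroup.lift_apply_of

@[simp] lemma lift_genMap_D (w : G → G → K) (d : G → K) (g : G) :
    FreeGroup.lift (genMap w d) (D G g) = d g := FreeGroup.lift_apply_of

variable [Group G] [Group H]

def relProdOf (q : ℕ) (w : G → G → K) (g g₁ : G) : K :=
  ((List.range (q - 1)).map (fun j =>
    w g⁻¹ ((g ^ ((1 : ℤ) - (q : ℤ) + (j + 1 : ℕ)) * g₁ *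
      (g ^ ((1 : ℤ) - (q : ℤ) + (j + 1 : ℕ)))⁻¹) ^ (j + 1)))).prod

@[simp] lemma lift_genMap_relProd (q : ℕ) (w : G → G → K) (d : G → K) (g g₁ : G) :
    FreeGroup.lift (genMap w d) (relProd G q g g₁) = relProdOf q w g g₁ := by
  simp [relProd, relProdOf, map_list_prod, Function.comp_def]

lemma relProdOf_comp (q : ℕ) (w : G → G → K) (φ : H →* G) (g g₁ : H) :
    relProdOf q (fun a b => w (φ a) (φ b)) g g₁ = relProdOf q w (φ g) (φ g₁) := by
  simp [relProdOf, map_zpow]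

/-- `w g h` and `d g` interpret `g ⊗ h` and `{(g,g)}` in `K`; the fields are the relations
(1)–(6), and for `q = 0` the vanishing of the symbols `{(g,g)}`. -/
structure IsTensorPairing (q : ℕ) (w : G → G → K) (d : G → K) : Prop where
  mul_left : ∀ g g₁ h : G, w (g * g₁) h = w (g * g₁ * g⁻¹) (g * h * g⁻¹) * w g h
  mul_right : ∀ g h h₁ : G, w g (h * h₁) = w g h * w (h * g * h⁻¹) (h * h₁ * h⁻¹)
  d_conj : ∀ g g₁ h₁ : G,
    d g * w g₁ h₁ * (d g)⁻¹ = w (g ^ q * g₁ * (g ^ q)⁻¹) (g ^ q * h₁ * (g ^ q)⁻¹)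
  d_mul : ∀ g g₁ : G, d (g * g₁) = d g * relProdOf q w g g₁ * d g₁
  d_commutator_d : ∀ g g₁ : G, d g * d g₁ * (d g)⁻¹ * (d g₁)⁻¹ = w (g ^ q) (g₁ ^ q)
  d_commutator : ∀ g h : G, d (g * h * g⁻¹ * h⁻¹) = w g h ^ q
  d_eq_one : q = 0 → ∀ g : G, d g = 1

structure IsExtPairing (q : ℕ) (w : G → G → K) (d : G → K) : Prop
    extends IsTensorPairing q w d where
  diag : ∀ g : G, w g g = 1

theorem lift_genMap_rels_iff (q : ℕ) (w : G → G → K) (d : G → K) :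
    (∀ r ∈ rels G q, FreeGroup.lift (genMap w d) r = 1) ↔ IsTensorPairing q w d := by
  simp only [rels, Set.mem_union, Set.mem_ofPred_eq, or_imp, forall_and, forall_exists_index,
    forall_comm (α := FreeGroup (Gen G)), forall_eq, and_imp, map_mul, map_inv, map_pow,
    lift_genMap_T, lift_genMap_D, lift_genMap_relProd, mul_inv_eq_one]
  exact ⟨fun ⟨⟨⟨⟨⟨⟨h₁, h₂⟩, h₃⟩, h₄⟩, h₅⟩, h₆⟩, h₇⟩ => ⟨h₁, h₂, h₃, h₄, h₅, h₆, h₇⟩,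
    fun ⟨h₁, h₂, h₃, h₄, h₅, h₆, h₇⟩ => ⟨⟨⟨⟨⟨⟨h₁, h₂⟩, h₃⟩, h₄⟩, h₅⟩, h₆⟩, h₇⟩⟩

namespace IsTensorPairing

variable {q : ℕ} {w : G → G → K} {d : G → K}

theorem comp (P : IsTensorPairing q w d) (φ : H →* G) :
    IsTensorPairing q (fun a b => w (φ a) (φ b)) (fun a => d (φ a)) where
  mul_left g g₁ h := by simpa only [map_mul, map_inv] using P.mul_left (φ g) (φ g₁) (φ h)
  mul_right g h h₁ := by simpa only [map_mul, map_inv] using P.mul_right (φ g) (φ h) (φ h₁)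
  d_conj g g₁ h₁ := by
    simpa only [map_mul, map_inv, map_pow] using P.d_conj (φ g) (φ g₁) (φ h₁)
  d_mul g g₁ := by simpa only [map_mul, relProdOf_comp] using P.d_mul (φ g) (φ g₁)
  d_commutator_d g g₁ := by simpa only [map_pow] using P.d_commutator_d (φ g) (φ g₁)
  d_commutator g h := by simpa only [map_mul, map_inv] using P.d_commutator (φ g) (φ h)
  d_eq_one hq g := P.d_eq_one hq (φ g)

theorem of_comp {φ : H →* G} (hφ : Function.Surjective φ)
    (P : IsTensorPairing q (fun a b => w (φ a) (φ b)) (fun a => d (φ a))) :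
    IsTensorPairing q w d where
  mul_left := hφ.forall₃.2 fun g g₁ h => by
    simpa only [map_mul, map_inv] using P.mul_left g g₁ h
  mul_right := hφ.forall₃.2 fun g h h₁ => by
    simpa only [map_mul, map_inv] using P.mul_right g h h₁
  d_conj := hφ.forall₃.2 fun g g₁ h₁ => by
    simpa only [map_mul, map_inv, map_pow] using P.d_conj g g₁ h₁
  d_mul := hφ.forall₂.2 fun g g₁ => by
    simpa only [map_mul, relProdOf_comp] using P.d_mul g g₁
  d_commutator_d := hφ.forall₂.2 fun g g₁ => by
    simpa only [map_pow] using P.d_commutator_d g g₁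
  d_commutator := hφ.forall₂.2 fun g h => by
    simpa only [map_mul, map_inv] using P.d_commutator g h
  d_eq_one hq := hφ.forall.2 (P.d_eq_one hq)

end IsTensorPairing

namespace IsExtPairing

variable {q : ℕ} {w : G → G → K} {d : G → K}

theorem comp (P : IsExtPairing q w d) (φ : H →* G) :
    IsExtPairing q (fun a b => w (φ a) (φ b)) (fun a => d (φ a)) :=
  ⟨P.toIsTensorPairing.comp φ, fun g => P.diag (φ g)⟩

theorem of_comp {φ : H →* G} (hφ : Function.Surjective φ)
    (P : IsExtPairing q (fun a b => w (φ a) (φ b)) (fun a => d (φ a))) :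
    IsExtPairing q w d :=
  ⟨P.toIsTensorPairing.of_comp hφ, hφ.forall.2 P.diag⟩

-- Expand `1 = (x * y) ∧ (x * y)` in both arguments; the diagonal terms vanish.
theorem mul_swap_eq_one (P : IsExtPairing q w d) (a x : G) : w a x * w x a = 1 := by
  suffices key : ∀ y : G, w (x * y * x⁻¹) x * w x (x * y * x⁻¹) = 1 by
    simpa only [show x * (x⁻¹ * a * x) * x⁻¹ = a by group] using key (x⁻¹ * a * x)
  intro y
  have h := P.diag (x * y)
  rwa [P.mul_right, P.mul_left x y x, mul_inv_cancel_right, P.diag x, mul_one,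
    show x * (x * y) * x⁻¹ = x * (x * y * x⁻¹) by group, P.mul_left x (x * y * x⁻¹), P.diag,
    one_mul] at h

end IsExtPairing

section extSquare

variable (q : ℕ)

theorem lift_genMap_wmk_dwmk :
    FreeGroup.lift (genMap (wmk G q) (dwmk G q)) =
      (QuotientGroup.mk' (nabla G q)).comp (PresentedGroup.mk (rels G q)) :=
  FreeGroup.ext_hom _ _ fun a => by cases a <;> rfl

theorem isExtPairing_wmk_dwmk : IsExtPairing q (wmk G q) (dwmk G q) where
  toIsTensorPairing := (lift_genMap_rels_iff q _ _).1 fun r hr => by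
    have hr' : (PresentedGroup.mk (rels G q) r : tensorSquare G q) = 1 :=
      (QuotientGroup.eq_one_iff _).2 (Subgroup.subset_normalClosure hr)
    rw [lift_genMap_wmk_dwmk]
    exact (congrArg (QuotientGroup.mk' (nabla G q)) hr').trans (map_one _)
  diag g := (QuotientGroup.eq_one_iff _).2 (Subgroup.subset_normalClosure ⟨g, rfl⟩)

variable {q} {w : G → G → K} {d : G → K}

def tensorLift (P : IsTensorPairing q w d) : tensorSquare G q →* K :=
  PresentedGroup.toGroup ((lift_genMap_rels_iff q w d).2 P)

@[simp] lemma tensorLift_tmk (P : IsTensorPairing q w d) (g h : G) :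
    tensorLift P (tmk G q g h) = w g h :=
  PresentedGroup.toGroup.of _

@[simp] lemma tensorLift_dmk (P : IsTensorPairing q w d) (g : G) :
    tensorLift P (dmk G q g) = d g :=
  PresentedGroup.toGroup.of _

def extLift (P : IsExtPairing q w d) : extSquare G q →* K :=
  QuotientGroup.lift (nabla G q) (tensorLift P.toIsTensorPairing) <|
    Subgroup.normalClosure_le_normal (N := (tensorLift P.toIsTensorPairing).ker) <| by
      rintro _ ⟨g, rfl⟩
      exact (tensorLift_tmk _ g g).trans (P.diag g)

@[simp] lemma extLift_wmk (P : IsExtPairing q w d) (g h : G) :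
    extLift P (wmk G q g h) = w g h :=
  tensorLift_tmk P.toIsTensorPairing g h

@[simp] lemma extLift_dwmk (P : IsExtPairing q w d) (g : G) :
    extLift P (dwmk G q g) = d g :=
  tensorLift_dmk P.toIsTensorPairing g

theorem extSquare_hom_ext {f₁ f₂ : extSquare G q →* K}
    (hw : ∀ g h : G, f₁ (wmk G q g h) = f₂ (wmk G q g h))
    (hd : ∀ g : G, f₁ (dwmk G q g) = f₂ (dwmk G q g)) : f₁ = f₂ :=
  QuotientGroup.monoidHom_ext (nabla G q) <| PresentedGroup.ext fun
    | .t g h => hw g h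
    | .d g => hd g

variable (q)

def extMap (φ : G →* H) : extSquare G q →* extSquare H q :=
  extLift ((isExtPairing_wmk_dwmk q).comp φ)

@[simp] lemma extMap_wmk (φ : G →* H) (g h : G) :
    extMap q φ (wmk G q g h) = wmk H q (φ g) (φ h) :=
  extLift_wmk _ g h

@[simp] lemma extMap_dwmk (φ : G →* H) (g : G) :
    extMap q φ (dwmk G q g) = dwmk H q (φ g) :=
  extLift_dwmk _ g

end extSquare

section exteriorKernel

variable {q : ℕ}

theorem wmk_eq_one_of_mem_Eext_right {a : G} (ha : a ∈ Eext G q) (g : G) :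
    wmk G q g a = 1 := by
  simpa only [ha.1 g, mul_one] using (isExtPairing_wmk_dwmk q).mul_swap_eq_one g a

variable {N : Subgroup G} [N.Normal] (hN : (N : Set G) ⊆ Eext G q)
include hN

theorem wmk_mul_mem_left {a : G} (ha : a ∈ N) (g h : G) : wmk G q (g * a) h = wmk G q g h := by
  rw [(isExtPairing_wmk_dwmk q).mul_left, (hN (‹N.Normal›.conj_mem a ha g)).1, one_mul]

theorem wmk_mul_mem_right {a : G} (ha : a ∈ N) (g h : G) : wmk G q g (h * a) = wmk G q g h := by
  rw [(isExtPairing_wmk_dwmk q).mul_right,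
    wmk_eq_one_of_mem_Eext_right (hN (‹N.Normal›.conj_mem a ha h)), mul_one]

theorem relProdOf_wmk_eq_one {a : G} (ha : a ∈ N) (g : G) : relProdOf q (wmk G q) g a = 1 :=
  List.prod_eq_one <| by
    simp only [List.mem_map, forall_exists_index, and_imp, forall_apply_eq_imp_iff₂]
    exact fun j _ =>
      wmk_eq_one_of_mem_Eext_right (hN (N.pow_mem (‹N.Normal›.conj_mem a ha _) _)) _

theorem dwmk_mul_mem {a : G} (ha : a ∈ N) (g : G) : dwmk G q (g * a) = dwmk G q g := by
  rw [(isExtPairing_wmk_dwmk q).d_mul, relProdOf_wmk_eq_one hN ha, (hN ha).2, mul_one, mul_one]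

end exteriorKernel

section surjective

variable {q : ℕ} {φ : G →* H}

theorem wmk_eq_of_map_eq (hker : (φ.ker : Set G) ⊆ Eext G q) {g g' h h' : G}
    (hg : φ g = φ g') (hh : φ h = φ h') : wmk G q g h = wmk G q g' h' := by
  rw [φ.eq_iff] at hg hh
  calc wmk G q g h = wmk G q (g' * (g'⁻¹ * g)) (h' * (h'⁻¹ * h)) := by
        simp only [mul_inv_cancel_left]
    _ = wmk G q g' h' := by rw [wmk_mul_mem_left hker hg, wmk_mul_mem_right hker hh]

theorem dwmk_eq_of_map_eq (hker : (φ.ker : Set G) ⊆ Eext G q) {g g' : G} (hg : φ g = φ g') :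
    dwmk G q g = dwmk G q g' := by
  rw [φ.eq_iff] at hg
  rw [← dwmk_mul_mem hker hg g', mul_inv_cancel_left]

theorem isExtPairing_surjInv (hφ : Function.Surjective φ)
    (hker : (φ.ker : Set G) ⊆ Eext G q) :
    IsExtPairing q (fun x y => wmk G q (Function.surjInv hφ x) (Function.surjInv hφ y))
      (fun x => dwmk G q (Function.surjInv hφ x)) := by
  refine IsExtPairing.of_comp hφ ?_
  have hw : (fun a b => wmk G q (Function.surjInv hφ (φ a)) (Function.surjInv hφ (φ b))) =
      wmk G q := funext₂ fun a b =>
    wmk_eq_of_map_eq hker (Function.surjInv_eq hφ _) (Function.surjInv_eq hφ _)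
  have hd : (fun a => dwmk G q (Function.surjInv hφ (φ a))) = dwmk G q :=
    funext fun a => dwmk_eq_of_map_eq hker (Function.surjInv_eq hφ _)
  rw [hw, hd]
  exact isExtPairing_wmk_dwmk q

variable (q) in
noncomputable def extEquivOfSurjective (hφ : Function.Surjective φ)
    (hker : (φ.ker : Set G) ⊆ Eext G q) : extSquare G q ≃* extSquare H q :=
  MonoidHom.toMulEquiv (extMap q φ) (extLift (isExtPairing_surjInv hφ hker))
    (extSquare_hom_ext
      (fun g h => wmk_eq_of_map_eq hker (Function.surjInv_eq hφ _) (Function.surjInv_eq hφ _))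
      (fun g => dwmk_eq_of_map_eq hker (Function.surjInv_eq hφ _)))
    (extSquare_hom_ext
      (fun x y => by simp [Function.surjInv_eq hφ])
      (fun x => by simp [Function.surjInv_eq hφ]))

end surjective

end QTensor

open QTensor in
/-- If `A ≤ E^∧_q(G)`, `B ≤ E^∧_q(H)` and `G/A ≅ H/B`, then `G ∧^q G ≅ H ∧^q H`. -/
theorem extSquare_iso_of_quotient_iso (q : ℕ) (G H : Type) [Group G] [Group H]
    (A : Subgroup G) (B : Subgroup H) [A.Normal] [B.Normal]
    (hA : (A : Set G) ⊆ Eext G q) (hB : (B : Set H) ⊆ Eext H q)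
    (e : (G ⧸ A) ≃* (H ⧸ B)) :
    Nonempty (extSquare G q ≃* extSquare H q) := by
  let φ : G →* H ⧸ B := (e : G ⧸ A →* H ⧸ B).comp (QuotientGroup.mk' A)
  have hφ : Function.Surjective φ := e.surjective.comp (QuotientGroup.mk'_surjective A)
  have hker : φ.ker = A := by rw [MonoidHom.ker_mulEquiv_comp, QuotientGroup.ker_mk']
  have hkerB : (QuotientGroup.mk' B).ker = B := QuotientGroup.ker_mk' B
  exact ⟨(extEquivOfSurjective q hφ (by rwa [hker])).trans
    (extEquivOfSurjective q (QuotientGroup.mk'_surjective B) (by rwa [hkerB])).symm⟩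
end

section
/- Let q ≥ 0 be an integer. If two groups G and H are weak q-exterior isoclinic, then M^q(G) ≅ M^q(H). In particular, the q-Schur multiplier M^q is invariant under q-exterior isoclinism. -/
/-!
If `B ⊆ E^∧_q(H)` is normal, then `H ∧^q H ≅ (H/B) ∧^q (H/B)`: the generators `a ∧ b` and
`{(a,a)}` of `H ∧^q H` only depend on the cosets `aB`, `bB` (by the defining relations and
`a ∧ b = (b ∧ a)⁻¹`), and every defining relation of `(H/B) ∧^q (H/B)` is the image of one of
`H ∧^q H`. So `α` yields `Φ : G ∧^q G ≅ (G/A) ∧^q (G/A) ≅ (H/B) ∧^q (H/B) ≅ H ∧^q H`, and the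
compatibility of `α` with `β` says that `η_H ∘ Φ = β ∘ η_G` on generators, so `Φ` maps
`ker η_G` onto `ker η_H`.
-/

def MulEquiv.restrictKer {X Y M N : Type*} [Group X] [Group Y] [Group M] [Group N]
    (e : X ≃* Y) {f : X →* M} {g : Y →* N} (h : ∀ x, g (e x) = 1 ↔ f x = 1) :
    f.ker ≃* g.ker :=
  (e.subgroupMap f.ker).trans <| MulEquiv.subgroupCongr <| by
    ext y
    simpa [Subgroup.map_equiv_eq_comap_symm] using (h (e.symm y)).symm

namespace QTensor

variable {G H : Type}

def Gen.map (f : G → H) : Gen G → Gen H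
  | .t g h => .t (f g) (f h)
  | .d g => .d (f g)

@[simp] lemma map_T (f : G → H) (g h : G) :
    FreeGroup.map (Gen.map f) (T G g h) = T H (f g) (f h) :=
  FreeGroup.map.of

@[simp] lemma map_D (f : G → H) (g : G) : FreeGroup.map (Gen.map f) (D G g) = D H (f g) :=
  FreeGroup.map.of

variable [Group G] [Group H] {q : ℕ}

@[simp] lemma map_relProd (f : G →* H) (g g₁ : G) :
    FreeGroup.map (Gen.map f) (relProd G q g g₁) = relProd H q (f g) (f g₁) := by
  simp [relProd, map_list_prod, Function.comp_def]

lemma map_mem_rels (f : G →* H) {r : FreeGroup (Gen G)} (hr : r ∈ rels G q) :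
    FreeGroup.map (Gen.map f) r ∈ rels H q := by
  rcases hr with ((((((⟨g, g₁, h, rfl⟩ | ⟨g, h, h₁, rfl⟩) | ⟨g, g₁, h₁, rfl⟩) | ⟨g, g₁, rfl⟩) |
    ⟨g, g₁, rfl⟩) | ⟨g, h, rfl⟩) | ⟨hq, g, rfl⟩) <;>
    simp only [map_mul, map_inv, map_pow, map_T, map_D, map_relProd]
  · exact Or.inl <| Or.inl <| Or.inl <| Or.inl <| Or.inl <| Or.inl ⟨f g, f g₁, f h, rfl⟩
  · exact Or.inl <| Or.inl <| Or.inl <| Or.inl <| Or.inl <| Or.inr ⟨f g, f h, f h₁, rfl⟩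
  · exact Or.inl <| Or.inl <| Or.inl <| Or.inl <| Or.inr ⟨f g, f g₁, f h₁, rfl⟩
  · exact Or.inl <| Or.inl <| Or.inl <| Or.inr ⟨f g, f g₁, rfl⟩
  · exact Or.inl <| Or.inl <| Or.inr ⟨f g, f g₁, rfl⟩
  · exact Or.inl <| Or.inr ⟨f g, f h, rfl⟩
  · exact Or.inr ⟨hq, f g, rfl⟩

lemma rels_subset_image_map {f : G →* H} (hf : Function.Surjective f) :
    rels H q ⊆ FreeGroup.map (Gen.map f) '' rels G q := by
  set s := Function.surjInv hf
  have hs : ∀ x, f (s x) = x := Function.surjInv_eq hf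
  rintro _ ((((((⟨g, g₁, h, rfl⟩ | ⟨g, h, h₁, rfl⟩) | ⟨g, g₁, h₁, rfl⟩) | ⟨g, g₁, rfl⟩) |
    ⟨g, g₁, rfl⟩) | ⟨g, h, rfl⟩) | ⟨hq, g, rfl⟩)
  · refine ⟨_, Or.inl <| Or.inl <| Or.inl <| Or.inl <| Or.inl <| Or.inl ⟨s g, s g₁, s h, rfl⟩, ?_⟩
    simp only [map_mul, map_inv, map_T, hs]
  · refine ⟨_, Or.inl <| Or.inl <| Or.inl <| Or.inl <| Or.inl <| Or.inr ⟨s g, s h, s h₁, rfl⟩, ?_⟩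
    simp only [map_mul, map_inv, map_T, hs]
  · refine ⟨_, Or.inl <| Or.inl <| Or.inl <| Or.inl <| Or.inr ⟨s g, s g₁, s h₁, rfl⟩, ?_⟩
    simp only [map_mul, map_inv, map_pow, map_T, map_D, hs]
  · refine ⟨_, Or.inl <| Or.inl <| Or.inl <| Or.inr ⟨s g, s g₁, rfl⟩, ?_⟩
    simp only [map_mul, map_inv, map_D, map_relProd, hs]
  · refine ⟨_, Or.inl <| Or.inl <| Or.inr ⟨s g, s g₁, rfl⟩, ?_⟩
    simp only [map_mul, map_inv, map_pow, map_T, map_D, hs]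
  · refine ⟨_, Or.inl <| Or.inr ⟨s g, s h, rfl⟩, ?_⟩
    simp only [map_mul, map_inv, map_pow, map_T, map_D, hs]
  · exact ⟨_, Or.inr ⟨hq, s g, rfl⟩, by rw [map_D, hs]⟩

namespace extSquare

variable (q) in
def mk : FreeGroup (Gen G) →* extSquare G q :=
  (QuotientGroup.mk' (nabla G q)).comp (PresentedGroup.mk (rels G q))

@[simp] lemma mk_T (g h : G) : mk q (T G g h) = wmk G q g h := rfl

@[simp] lemma mk_D (g : G) : mk q (D G g) = dwmk G q g := rfl

lemma mk_surjective : Function.Surjective (mk (G := G) q) :=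
  (QuotientGroup.mk'_surjective _).comp (PresentedGroup.mk_surjective _)

lemma mk_eq_one_of_mem_rels {r : FreeGroup (Gen G)} (hr : r ∈ rels G q) : mk q r = 1 := by
  show QuotientGroup.mk' (nabla G q) (PresentedGroup.mk (rels G q) r) = 1
  rw [PresentedGroup.one_of_mem hr]
  exact map_one _

variable {M : Type*} [Group M]

lemma hom_ext {φ ψ : extSquare G q →* M}
    (hw : ∀ g h : G, φ (wmk G q g h) = ψ (wmk G q g h))
    (hd : ∀ g : G, φ (dwmk G q g) = ψ (dwmk G q g)) : φ = ψ :=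
  (MonoidHom.cancel_right mk_surjective).mp <| FreeGroup.ext_hom _ _ <| by
    rintro (⟨g, h⟩ | g)
    exacts [hw g h, hd g]

def lift (φ : FreeGroup (Gen G) →* M) (hrels : ∀ r ∈ rels G q, φ r = 1)
    (hself : ∀ g : G, φ (T G g g) = 1) : extSquare G q →* M :=
  have hrels' : ∀ r ∈ rels G q, FreeGroup.lift (φ ∘ FreeGroup.of) r = 1 := fun r hr => by
    rw [← FreeGroup.lift_unique φ (f := φ ∘ FreeGroup.of) fun _ => rfl, hrels r hr]
  QuotientGroup.lift (nabla G q) (PresentedGroup.toGroup hrels') <|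
    -- instance search does not see `tensorSquare G q` as the presented group it unfolds to
    @Subgroup.normalClosure_le_normal _ _ _ _ (MonoidHom.normal_ker _) <| by
      rintro _ ⟨g, rfl⟩
      exact (PresentedGroup.toGroup.of hrels').trans (hself g)

lemma lift_mk (φ : FreeGroup (Gen G) →* M) (hrels : ∀ r ∈ rels G q, φ r = 1)
    (hself : ∀ g : G, φ (T G g g) = 1) (w : FreeGroup (Gen G)) :
    lift φ hrels hself (mk q w) = φ w :=
  (FreeGroup.lift_unique φ (f := φ ∘ FreeGroup.of) fun _ => rfl).symm

end extSquare

lemma wmk_self (g : G) : wmk G q g g = 1 :=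
  (QuotientGroup.eq_one_iff _).mpr (Subgroup.subset_normalClosure ⟨g, rfl⟩)

lemma wmk_mul_left (g g₁ h : G) :
    wmk G q (g * g₁) h = wmk G q (g * g₁ * g⁻¹) (g * h * g⁻¹) * wmk G q g h := by
  have := extSquare.mk_eq_one_of_mem_rels (q := q)
    (Or.inl <| Or.inl <| Or.inl <| Or.inl <| Or.inl <| Or.inl ⟨g, g₁, h, rfl⟩)
  simpa only [map_mul, map_inv, extSquare.mk_T, mul_inv_eq_one] using this

lemma wmk_mul_right (g h h₁ : G) :
    wmk G q g (h * h₁) = wmk G q g h * wmk G q (h * g * h⁻¹) (h * h₁ * h⁻¹) := by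
  have := extSquare.mk_eq_one_of_mem_rels (q := q)
    (Or.inl <| Or.inl <| Or.inl <| Or.inl <| Or.inl <| Or.inr ⟨g, h, h₁, rfl⟩)
  simpa only [map_mul, map_inv, extSquare.mk_T, mul_inv_eq_one] using this

lemma dwmk_mul (g g₁ : G) :
    dwmk G q (g * g₁) = dwmk G q g * extSquare.mk q (relProd G q g g₁) * dwmk G q g₁ := by
  have := extSquare.mk_eq_one_of_mem_rels (q := q)
    (Or.inl <| Or.inl <| Or.inl <| Or.inr ⟨g, g₁, rfl⟩)
  simpa only [map_mul, map_inv, extSquare.mk_D, mul_inv_eq_one] using this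

lemma wmk_swap (a b : G) : wmk G q a b = (wmk G q b a)⁻¹ := by
  refine eq_inv_of_mul_eq_one_left ?_
  -- expand `ab ∧ ab = 1`, writing `ab = b · (b⁻¹ab)`, with both product rules
  have h := wmk_mul_left (q := q) b (b⁻¹ * a * b) (a * b)
  rw [show b * (b⁻¹ * a * b) * b⁻¹ = a by group, show b * (a * b) * b⁻¹ = b * a by group,
    show b * (b⁻¹ * a * b) = a * b by group, wmk_self, wmk_mul_right a b a,
    wmk_mul_right b a b, wmk_self, wmk_self, mul_one, mul_one] at h
  exact h.symm

lemma wmk_eq_one_of_mem_Eext {b : G} (hb : b ∈ Eext G q) (x : G) : wmk G q x b = 1 := by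
  rw [wmk_swap, hb.1, inv_one]

namespace extSquare

def map (f : G →* H) : extSquare G q →* extSquare H q :=
  lift ((mk q).comp (FreeGroup.map (Gen.map f)))
    (fun _ hr => mk_eq_one_of_mem_rels (map_mem_rels f hr)) (fun g => wmk_self (f g))

@[simp] lemma map_wmk (f : G →* H) (g h : G) : map f (wmk G q g h) = wmk H q (f g) (f h) :=
  lift_mk _ _ _ (T G g h)

@[simp] lemma map_dwmk (f : G →* H) (g : G) : map f (dwmk G q g) = dwmk H q (f g) :=
  lift_mk _ _ _ (D G g)

lemma map_comp_map {K : Type} [Group K] (f : H →* K) (f' : G →* H) :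
    (map (q := q) f).comp (map f') = map (f.comp f') :=
  hom_ext (fun _ _ => by simp) (fun _ => by simp)

lemma map_id : map (q := q) (MonoidHom.id G) = MonoidHom.id _ :=
  hom_ext (fun _ _ => by simp) (fun _ => by simp)

def congr (e : G ≃* H) : extSquare G q ≃* extSquare H q :=
  (map (e : G →* H)).toMulEquiv (map (e.symm : H →* G))
    (by rw [map_comp_map, e.coe_monoidHom_symm_comp_coe_monoidHom, map_id])
    (by rw [map_comp_map, e.coe_monoidHom_comp_coe_monoidHom_symm, map_id])

@[simp] lemma congr_wmk (e : G ≃* H) (g h : G) : congr e (wmk G q g h) = wmk H q (e g) (e h) :=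
  map_wmk _ g h

@[simp] lemma congr_dwmk (e : G ≃* H) (g : G) : congr e (dwmk G q g) = dwmk H q (e g) :=
  map_dwmk _ g

end extSquare

section Eext

variable {B : Subgroup H} [B.Normal] (hB : (B : Set H) ⊆ Eext H q)
include hB

lemma wmk_eq_of_mk_eq {a a' b b' : H} (ha : (a : H ⧸ B) = a') (hb : (b : H ⧸ B) = b') :
    wmk H q a b = wmk H q a' b' := by
  obtain ⟨c, hc, rfl⟩ : ∃ c ∈ B, a' = a * c := ⟨a⁻¹ * a', QuotientGroup.eq.mp ha, by group⟩
  obtain ⟨d, hd, rfl⟩ : ∃ d ∈ B, b' = b * d := ⟨b⁻¹ * b', QuotientGroup.eq.mp hb, by group⟩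
  rw [wmk_mul_left, (hB (‹B.Normal›.conj_mem c hc a)).1, one_mul, wmk_mul_right,
    wmk_eq_one_of_mem_Eext (hB <| ‹B.Normal›.conj_mem d hd b), mul_one]

lemma mk_relProd_eq_one {b : H} (hb : b ∈ B) (g : H) :
    extSquare.mk q (relProd H q g b) = 1 := by
  simp only [relProd, map_list_prod, List.map_map]
  refine List.prod_eq_one fun x hx => ?_
  obtain ⟨j, -, rfl⟩ := List.mem_map.mp hx
  exact wmk_eq_one_of_mem_Eext (hB <| B.pow_mem (‹B.Normal›.conj_mem b hb _) _) _

lemma dwmk_eq_of_mk_eq {a a' : H} (ha : (a : H ⧸ B) = a') : dwmk H q a = dwmk H q a' := by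
  obtain ⟨c, hc, rfl⟩ : ∃ c ∈ B, a' = a * c := ⟨a⁻¹ * a', QuotientGroup.eq.mp ha, by group⟩
  rw [dwmk_mul, (hB hc).2, mul_one, mk_relProd_eq_one hB hc, mul_one]

lemma mk_comp_map_out_comp_map_mk :
    (extSquare.mk q).comp ((FreeGroup.map (Gen.map (Quotient.out : H ⧸ B → H))).comp
      (FreeGroup.map (Gen.map (QuotientGroup.mk' B)))) = extSquare.mk q := by
  refine FreeGroup.ext_hom _ _ ?_
  rintro (⟨g, h⟩ | g)
  · exact wmk_eq_of_mk_eq hB (QuotientGroup.out_eq' _) (QuotientGroup.out_eq' _)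
  · exact dwmk_eq_of_mk_eq hB (QuotientGroup.out_eq' _)

noncomputable def extSquare.ofQuotient : extSquare (H ⧸ B) q →* extSquare H q :=
  extSquare.lift ((extSquare.mk q).comp (FreeGroup.map (Gen.map Quotient.out)))
    (fun _ hr => by
      obtain ⟨r, hr', rfl⟩ := rels_subset_image_map (QuotientGroup.mk'_surjective B) hr
      exact (DFunLike.congr_fun (mk_comp_map_out_comp_map_mk hB) r).trans
        (extSquare.mk_eq_one_of_mem_rels hr'))
    (fun _ => wmk_self _)

@[simp] lemma extSquare.ofQuotient_wmk (x y : H ⧸ B) :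
    extSquare.ofQuotient hB (wmk (H ⧸ B) q x y) = wmk H q x.out y.out :=
  extSquare.lift_mk _ _ _ (T _ x y)

@[simp] lemma extSquare.ofQuotient_dwmk (x : H ⧸ B) :
    extSquare.ofQuotient hB (dwmk (H ⧸ B) q x) = dwmk H q x.out :=
  extSquare.lift_mk _ _ _ (D _ x)

noncomputable def extSquare.quotientEquiv : extSquare H q ≃* extSquare (H ⧸ B) q :=
  (extSquare.map (QuotientGroup.mk' B)).toMulEquiv (extSquare.ofQuotient hB)
    (extSquare.hom_ext
      (fun _ _ => wmk_eq_of_mk_eq hB (QuotientGroup.out_eq' _) (QuotientGroup.out_eq' _))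
      (fun _ => dwmk_eq_of_mk_eq hB (QuotientGroup.out_eq' _)))
    (extSquare.hom_ext (fun _ _ => by simp) (fun _ => by simp))

end Eext

section Isoclinism

variable {A : Subgroup G} {B : Subgroup H} [A.Normal] [B.Normal]
  (hA : (A : Set G) ⊆ Eext G q) (hB : (B : Set H) ⊆ Eext H q) (α : G ⧸ A ≃* H ⧸ B)

noncomputable def extSquare.equivOfQuotientEquiv : extSquare G q ≃* extSquare H q :=
  (extSquare.quotientEquiv hA).trans ((extSquare.congr α).trans (extSquare.quotientEquiv hB).symm)

@[simp] lemma extSquare.equivOfQuotientEquiv_wmk (g h : G) :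
    extSquare.equivOfQuotientEquiv hA hB α (wmk G q g h) = wmk H q (α g).out (α h).out := by
  simp [extSquare.equivOfQuotientEquiv, extSquare.quotientEquiv]

@[simp] lemma extSquare.equivOfQuotientEquiv_dwmk (g : G) :
    extSquare.equivOfQuotientEquiv hA hB α (dwmk G q g) = dwmk H q (α g).out := by
  simp [extSquare.equivOfQuotientEquiv, extSquare.quotientEquiv]

end Isoclinism

lemma range_le_qPowComm {η : extSquare G q →* G}
    (hw : ∀ g h : G, η (wmk G q g h) = g * h * g⁻¹ * h⁻¹) (hd : ∀ g : G, η (dwmk G q g) = g ^ q) :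
    η.range ≤ qPowComm G q :=
  calc η.range = (η.comp (extSquare.mk q)).range := by
        rw [MonoidHom.range_comp, MonoidHom.range_eq_top.mpr extSquare.mk_surjective,
          ← MonoidHom.range_eq_map]
    _ = Subgroup.closure (Set.range (η.comp (extSquare.mk q) ∘ FreeGroup.of)) := by
        rw [← FreeGroup.range_lift_eq_closure]
        exact congrArg MonoidHom.range (FreeGroup.lift.apply_symm_apply _).symm
    _ ≤ qPowComm G q := (Subgroup.closure_le _).mpr <| by
        rintro _ ⟨⟨g, h⟩ | g, rfl⟩
        · show η (wmk G q g h) ∈ _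
          exact (hw g h).symm ▸ commutator_mem_qPowComm G q g h
        · show η (dwmk G q g) ∈ _
          exact (hd g).symm ▸ pow_mem_qPowComm G q g

end QTensor

open QTensor in
/-- Invariance of the `q`-Schur multiplier `M^q = ker η` under weak `q`-exterior
isoclinism (`η : G ∧^q G → G` is the homomorphism with `η(g ∧ h) = [g,h]` and
`η({(g,g)}) = g^q`, given here by its defining properties). -/
theorem qSchurMultiplier_iso_of_weak_qExteriorIsoclinic (q : ℕ)
    (G H : Type) [Group G] [Group H]
    (ηG : extSquare G q →* G)
    (hηG1 : ∀ g h : G, ηG (wmk G q g h) = g * h * g⁻¹ * h⁻¹)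
    (hηG2 : ∀ g : G, ηG (dwmk G q g) = g ^ q)
    (ηH : extSquare H q →* H)
    (hηH1 : ∀ g h : H, ηH (wmk H q g h) = g * h * g⁻¹ * h⁻¹)
    (hηH2 : ∀ g : H, ηH (dwmk H q g) = g ^ q)
    -- weak q-exterior isoclinism data:
    (A : Subgroup G) (B : Subgroup H) [A.Normal] [B.Normal]
    (hA : (A : Set G) ⊆ Eext G q) (hB : (B : Set H) ⊆ Eext H q)
    (α : (G ⧸ A) ≃* (H ⧸ B)) (β : qPowComm G q ≃* qPowComm H q)
    (hαβ : ∀ (g₁ g₂ : G) (h₁ h₂ : H),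
      α (QuotientGroup.mk g₁) = QuotientGroup.mk h₁ →
      α (QuotientGroup.mk g₂) = QuotientGroup.mk h₂ →
      ((β ⟨g₁ * g₂ * g₁⁻¹ * g₂⁻¹, commutator_mem_qPowComm G q g₁ g₂⟩ : qPowComm H q) : H)
          = h₁ * h₂ * h₁⁻¹ * h₂⁻¹ ∧
      ((β ⟨g₁ ^ q, pow_mem_qPowComm G q g₁⟩ : qPowComm H q) : H) = h₁ ^ q) :
    Nonempty (ηG.ker ≃* ηH.ker) := by
  let Φ := extSquare.equivOfQuotientEquiv hA hB α
  have hηG : ∀ x, ηG x ∈ qPowComm G q := fun x => range_le_qPowComm hηG1 hηG2 ⟨x, rfl⟩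
  have hα : ∀ g : G, α g = ((α g).out : H ⧸ B) := fun g => (QuotientGroup.out_eq' _).symm
  have hΦ : ηH.comp Φ.toMonoidHom =
      (qPowComm H q).subtype.comp (β.toMonoidHom.comp (ηG.codRestrict _ hηG)) := by
    refine extSquare.hom_ext (fun g h => ?_) (fun g => ?_)
    · have : ηG.codRestrict _ hηG (wmk G q g h) = ⟨_, commutator_mem_qPowComm G q g h⟩ :=
        Subtype.ext (hηG1 g h)
      simp only [MonoidHom.comp_apply, MulEquiv.coe_toMonoidHom, Φ,
        extSquare.equivOfQuotientEquiv_wmk, hηH1, this]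
      exact (hαβ g h _ _ (hα g) (hα h)).1.symm
    · have : ηG.codRestrict _ hηG (dwmk G q g) = ⟨_, pow_mem_qPowComm G q g⟩ :=
        Subtype.ext (hηG2 g)
      simp only [MonoidHom.comp_apply, MulEquiv.coe_toMonoidHom, Φ,
        extSquare.equivOfQuotientEquiv_dwmk, hηH2, this]
      exact (hαβ g g _ _ (hα g) (hα g)).2.symm
  refine ⟨Φ.restrictKer fun x => ?_⟩
  rw [← MulEquiv.coe_toMonoidHom, ← MonoidHom.comp_apply, hΦ]
  simp
end

section
/- If two groups G and H are exterior isoclinic, then their Schur multipliers are isomorphic: M(G) ≅ M(H). -/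
/-!
Since `g ∧ h` only depends on the classes of `g` and `h` modulo the exterior centre, an
isomorphism `α : G ⧸ Z^∧(G) ≃* H ⧸ Z^∧(H)` induces an isomorphism `e : G ∧ G ≃* H ∧ H` with
`e (g ∧ h) = a ∧ b` whenever `α ḡ = ā` and `α h̄ = b̄`. Compatibility of `β` with commutators
says `η_H ∘ e = β ∘ η_G`, and as `β` is injective, `e` maps `ker η_G` onto `ker η_H`.
-/

namespace QTensor

/-- Ellis' exterior pairings: the maps `G → G → M` that factor through `G ∧ G`
(see `extSquareLift`). -/
structure IsExteriorPairing {G M : Type} [Group G] [Group M] (f : G → G → M) : Prop where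
  mul_left : ∀ g g₁ h : G, f (g * g₁) h = f (g * g₁ * g⁻¹) (g * h * g⁻¹) * f g h
  mul_right : ∀ g h h₁ : G, f g (h * h₁) = f g h * f (h * g * h⁻¹) (h * h₁ * h⁻¹)
  self : ∀ g : G, f g g = 1

namespace IsExteriorPairing

variable {G K M : Type} [Group G] [Group K] [Group M] {f : G → G → M}

theorem swap (hf : IsExteriorPairing f) (g k : G) : f k g = (f g k)⁻¹ := by
  obtain ⟨h, rfl⟩ : ∃ h, g * h * g⁻¹ = k := ⟨g⁻¹ * k * g, by group⟩
  have e₁ : f (g * h) g = f (g * h * g⁻¹) g := by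
    rw [hf.mul_left g h g, mul_inv_cancel_right, hf.self, mul_one]
  have e₂ : f (g * (g * h * g⁻¹)) (g * h * g⁻¹) = f g (g * h * g⁻¹) := by
    rw [hf.mul_left g (g * h * g⁻¹), hf.self, one_mul]
  -- expand `f (g * h) (g * h) = 1` on the right, then each factor on the left
  have e := hf.self (g * h)
  rw [hf.mul_right, e₁, show g * (g * h) * g⁻¹ = g * (g * h * g⁻¹) by group, e₂] at e
  exact eq_inv_of_mul_eq_one_left e

theorem comp (hf : IsExteriorPairing f) (φ : K →* G) :
    IsExteriorPairing fun a b => f (φ a) (φ b) where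
  mul_left g g₁ h := by simp only [map_mul, map_inv]; exact hf.mul_left _ _ _
  mul_right g h h₁ := by simp only [map_mul, map_inv]; exact hf.mul_right _ _ _
  self g := hf.self (φ g)

end IsExteriorPairing

section Relations

variable {G : Type} [Group G]

theorem isExteriorPairing_wmk (q : ℕ) : IsExteriorPairing (wmk G q) where
  mul_left g g₁ h := by
    have hr := PresentedGroup.one_of_mem (rels := rels G q)
      (Or.inl <| Or.inl <| Or.inl <| Or.inl <| Or.inl <| Or.inl ⟨g, g₁, h, rfl⟩)
    rw [map_mul, map_inv, mul_inv_eq_one] at hr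
    exact congrArg (QuotientGroup.mk (s := nabla G q)) hr
  mul_right g h h₁ := by
    have hr := PresentedGroup.one_of_mem (rels := rels G q)
      (Or.inl <| Or.inl <| Or.inl <| Or.inl <| Or.inl <| Or.inr ⟨g, h, h₁, rfl⟩)
    rw [map_mul, map_inv, mul_inv_eq_one] at hr
    exact congrArg (QuotientGroup.mk (s := nabla G q)) hr
  self g := (QuotientGroup.eq_one_iff _).mpr (Subgroup.subset_normalClosure ⟨g, rfl⟩)

theorem dwmk_zero_eq_one (g : G) : dwmk G 0 g = 1 :=
  congrArg (QuotientGroup.mk (s := nabla G 0))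
    (PresentedGroup.one_of_mem (rels := rels G 0) (Or.inr ⟨rfl, g, rfl⟩))

theorem closure_range_wmk :
    Subgroup.closure (Set.range fun p : G × G => wmk G 0 p.1 p.2) = ⊤ := by
  let π : FreeGroup (Gen G) →* extSquare G 0 :=
    (QuotientGroup.mk' (nabla G 0)).comp (PresentedGroup.mk (rels G 0))
  have hgen : Subgroup.closure (Set.range FreeGroup.of) ≤
      (Subgroup.closure (Set.range fun p : G × G => wmk G 0 p.1 p.2)).comap π := by
    rw [Subgroup.closure_le]
    rintro _ ⟨⟨g, h⟩ | g, rfl⟩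
    · exact Subgroup.subset_closure ⟨(g, h), rfl⟩
    · rw [SetLike.mem_coe, Subgroup.mem_comap,
        show π (FreeGroup.of (Gen.d g)) = 1 from dwmk_zero_eq_one g]
      exact one_mem _
  rw [FreeGroup.closure_range_of] at hgen
  refine eq_top_iff.mpr fun x _ => ?_
  obtain ⟨y, rfl⟩ := QuotientGroup.mk'_surjective (nabla G 0) x
  obtain ⟨w, rfl⟩ := PresentedGroup.mk_surjective (rels G 0) y
  exact hgen (Subgroup.mem_top w)

theorem extSquare_hom_ext_s2 {M : Type} [Group M] {f₁ f₂ : extSquare G 0 →* M}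
    (h : ∀ g k : G, f₁ (wmk G 0 g k) = f₂ (wmk G 0 g k)) : f₁ = f₂ :=
  MonoidHom.eq_of_eqOn_dense closure_range_wmk fun _ ⟨p, hp⟩ => hp ▸ h p.1 p.2

theorem apply_mem_commutator_of_wmk (η : extSquare G 0 →* G)
    (hη : ∀ g h : G, η (wmk G 0 g h) = g * h * g⁻¹ * h⁻¹) (x : extSquare G 0) :
    η x ∈ commutator G := by
  suffices η.range ≤ commutator G from this ⟨x, rfl⟩
  rw [MonoidHom.range_eq_map, ← closure_range_wmk, MonoidHom.map_closure, Subgroup.closure_le]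
  rintro _ ⟨_, ⟨⟨g, h⟩, rfl⟩, rfl⟩
  simpa only [hη, commutatorElement_def, SetLike.mem_coe] using mem_commutator G g h

end Relations

section Lift

variable {G M : Type} [Group G] [Group M]

/-- The symbols `{(g,g)}` are trivial in `G ∧ G`, since `q = 0`. -/
def Gen.lift (f : G → G → M) : Gen G → M
  | .t g h => f g h
  | .d _ => 1

theorem lift_rels_eq_one {f : G → G → M} (hf : IsExteriorPairing f) :
    ∀ r ∈ rels G 0, FreeGroup.lift (Gen.lift f) r = 1 := by
  rintro r (((((((⟨g, g₁, h, rfl⟩ | ⟨g, h, h₁, rfl⟩) | ⟨g, g₁, h₁, rfl⟩) | ⟨g, g₁, rfl⟩) |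
    ⟨g, g₁, rfl⟩) | ⟨g, h, rfl⟩) | ⟨-, g, rfl⟩))
  · simp only [map_mul, map_inv, T, FreeGroup.lift_apply_of, Gen.lift]
    rw [hf.mul_left g g₁ h, mul_inv_cancel]
  · simp only [map_mul, map_inv, T, FreeGroup.lift_apply_of, Gen.lift]
    rw [hf.mul_right g h h₁, mul_inv_cancel]
  all_goals simp [T, D, relProd, Gen.lift, hf.self]

def extSquareLift {f : G → G → M} (hf : IsExteriorPairing f) : extSquare G 0 →* M :=
  let φ : tensorSquare G 0 →* M := PresentedGroup.toGroup (lift_rels_eq_one hf)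
  QuotientGroup.lift (nabla G 0) φ <| Subgroup.normalClosure_le_normal <| by
    rintro _ ⟨g, rfl⟩
    exact (PresentedGroup.toGroup.of _).trans (hf.self g)

@[simp]
theorem extSquareLift_wmk {f : G → G → M} (hf : IsExteriorPairing f) (g h : G) :
    extSquareLift hf (wmk G 0 g h) = f g h :=
  PresentedGroup.toGroup.of (lift_rels_eq_one hf)

end Lift

section ExteriorCenter

variable {G : Type} [Group G] {q : ℕ} {Z : Subgroup G} [Z.Normal]

theorem wmk_mul_mem_left_s2 (hZ : (Z : Set G) ⊆ Zext G q) {z : G} (hz : z ∈ Z) (g h : G) :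
    wmk G q (g * z) h = wmk G q g h := by
  rw [(isExteriorPairing_wmk q).mul_left, hZ (Subgroup.Normal.conj_mem ‹_› z hz g), one_mul]

theorem wmk_mul_mem_right_s2 (hZ : (Z : Set G) ⊆ Zext G q) {z : G} (hz : z ∈ Z) (g h : G) :
    wmk G q g (h * z) = wmk G q g h := by
  rw [(isExteriorPairing_wmk q).mul_right, (isExteriorPairing_wmk q).swap (h * z * h⁻¹),
    hZ (Subgroup.Normal.conj_mem ‹_› z hz h), inv_one, mul_one]

theorem wmk_congr (hZ : (Z : Set G) ⊆ Zext G q) {g g' h h' : G}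
    (hg : (g : G ⧸ Z) = g') (hh : (h : G ⧸ Z) = h') : wmk G q g h = wmk G q g' h' := by
  obtain ⟨z, hz, rfl⟩ : ∃ z ∈ Z, g * z = g' :=
    ⟨g⁻¹ * g', QuotientGroup.eq.mp hg, mul_inv_cancel_left g g'⟩
  obtain ⟨w, hw, rfl⟩ : ∃ w ∈ Z, h * w = h' :=
    ⟨h⁻¹ * h', QuotientGroup.eq.mp hh, mul_inv_cancel_left h h'⟩
  rw [wmk_mul_mem_left_s2 hZ hz, wmk_mul_mem_right_s2 hZ hw]

def wmkQuotient (hZ : (Z : Set G) ⊆ Zext G q) : G ⧸ Z → G ⧸ Z → extSquare G q :=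
  Quotient.lift₂ (wmk G q) fun _ _ _ _ hg hh =>
    wmk_congr hZ (Quotient.sound hg) (Quotient.sound hh)

theorem isExteriorPairing_wmkQuotient (hZ : (Z : Set G) ⊆ Zext G q) :
    IsExteriorPairing (wmkQuotient hZ) where
  mul_left := by
    rintro ⟨g⟩ ⟨g₁⟩ ⟨h⟩
    exact (isExteriorPairing_wmk q).mul_left g g₁ h
  mul_right := by
    rintro ⟨g⟩ ⟨h⟩ ⟨h₁⟩
    exact (isExteriorPairing_wmk q).mul_right g h h₁
  self := by
    rintro ⟨g⟩
    exact (isExteriorPairing_wmk q).self g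

end ExteriorCenter

section Functoriality

variable {G H K : Type} [Group G] [Group H] [Group K]
  {ZG : Subgroup G} [ZG.Normal] {ZH : Subgroup H} [ZH.Normal] {ZK : Subgroup K} [ZK.Normal]

def extSquareMap (hZH : (ZH : Set H) ⊆ Zext H 0) (α : G ⧸ ZG →* H ⧸ ZH) :
    extSquare G 0 →* extSquare H 0 :=
  extSquareLift ((isExteriorPairing_wmkQuotient hZH).comp (α.comp (QuotientGroup.mk' ZG)))

theorem extSquareMap_wmk (hZH : (ZH : Set H) ⊆ Zext H 0) (α : G ⧸ ZG →* H ⧸ ZH) (g h : G) :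
    extSquareMap hZH α (wmk G 0 g h) = wmkQuotient hZH (α g) (α h) :=
  extSquareLift_wmk _ g h

theorem extSquareMap_wmkQuotient (hZG : (ZG : Set G) ⊆ Zext G 0)
    (hZH : (ZH : Set H) ⊆ Zext H 0) (α : G ⧸ ZG →* H ⧸ ZH) (x y : G ⧸ ZG) :
    extSquareMap hZH α (wmkQuotient hZG x y) = wmkQuotient hZH (α x) (α y) := by
  induction x using QuotientGroup.induction_on
  induction y using QuotientGroup.induction_on
  exact extSquareMap_wmk hZH α _ _

theorem extSquareMap_comp (hZH : (ZH : Set H) ⊆ Zext H 0)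
    (hZK : (ZK : Set K) ⊆ Zext K 0) (α : G ⧸ ZG →* H ⧸ ZH) (β : H ⧸ ZH →* K ⧸ ZK) :
    (extSquareMap hZK β).comp (extSquareMap hZH α) = extSquareMap hZK (β.comp α) :=
  extSquare_hom_ext_s2 fun g h => by
    simp only [MonoidHom.comp_apply, extSquareMap_wmk, extSquareMap_wmkQuotient hZH hZK]

theorem extSquareMap_id (hZG : (ZG : Set G) ⊆ Zext G 0) :
    extSquareMap hZG (MonoidHom.id (G ⧸ ZG)) = MonoidHom.id _ :=
  extSquare_hom_ext_s2 fun g h => extSquareMap_wmk hZG _ g h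

def extSquareCongr (hZG : (ZG : Set G) ⊆ Zext G 0) (hZH : (ZH : Set H) ⊆ Zext H 0)
    (α : G ⧸ ZG ≃* H ⧸ ZH) : extSquare G 0 ≃* extSquare H 0 :=
  MonoidHom.toMulEquiv (extSquareMap hZH (α : G ⧸ ZG →* H ⧸ ZH))
    (extSquareMap hZG (α.symm : H ⧸ ZH →* G ⧸ ZG))
    (by rw [extSquareMap_comp hZH hZG, α.coe_monoidHom_symm_comp_coe_monoidHom,
      extSquareMap_id])
    (by rw [extSquareMap_comp hZG hZH, α.coe_monoidHom_comp_coe_monoidHom_symm,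
      extSquareMap_id])

theorem extSquareCongr_wmk (hZG : (ZG : Set G) ⊆ Zext G 0) (hZH : (ZH : Set H) ⊆ Zext H 0)
    (α : G ⧸ ZG ≃* H ⧸ ZH) {g h : G} {a b : H} (ha : α g = a) (hb : α h = b) :
    extSquareCongr hZG hZH α (wmk G 0 g h) = wmk H 0 a b := by
  rw [extSquareCongr, MonoidHom.toMulEquiv_apply, extSquareMap_wmk]
  exact congrArg₂ (wmkQuotient hZH) ha hb

end Functoriality

end QTensor

open QTensor in
open scoped commutatorElement in
/-- If `G` and `H` are exterior isoclinic, then `M(G) ≅ M(H)`, where the Schur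
multiplier `M(G)` is the kernel of `η : G ∧ G → G`, `η(g ∧ h) = [g,h]`. -/
theorem schurMultiplier_iso_of_exteriorIsoclinic (G H : Type) [Group G] [Group H]
    (ηG : extSquare G 0 →* G)
    (hηG : ∀ g h : G, ηG (wmk G 0 g h) = g * h * g⁻¹ * h⁻¹)
    (ηH : extSquare H 0 →* H)
    (hηH : ∀ g h : H, ηH (wmk H 0 g h) = g * h * g⁻¹ * h⁻¹)
    -- the exterior centers, as (necessarily normal) subgroups:
    (ZG : Subgroup G) [ZG.Normal] (hZG : (ZG : Set G) = Zext G 0)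
    (ZH : Subgroup H) [ZH.Normal] (hZH : (ZH : Set H) = Zext H 0)
    -- exterior isoclinism data:
    (α : (G ⧸ ZG) ≃* (H ⧸ ZH)) (β : commutator G ≃* commutator H)
    (hαβ : ∀ (g₁ g₂ : G) (h₁ h₂ : H),
      α (QuotientGroup.mk g₁) = QuotientGroup.mk h₁ →
      α (QuotientGroup.mk g₂) = QuotientGroup.mk h₂ →
      ((β ⟨⁅g₁, g₂⁆, mem_commutator G g₁ g₂⟩ : commutator H) : H) = ⁅h₁, h₂⁆) :
    Nonempty (ηG.ker ≃* ηH.ker) := by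
  let e := extSquareCongr hZG.subset hZH.subset α
  have hηG_mem := apply_mem_commutator_of_wmk ηG hηG
  let j : commutator G →* H := (commutator H).subtype.comp β.toMonoidHom
  have hj : Function.Injective j := (commutator H).subtype_injective.comp β.injective
  have hcomm :
      ηH.comp (e : extSquare G 0 →* extSquare H 0) = j.comp (ηG.codRestrict _ hηG_mem) :=
    extSquare_hom_ext_s2 fun g h => by
      obtain ⟨a, ha⟩ := QuotientGroup.mk_surjective (α g)
      obtain ⟨b, hb⟩ := QuotientGroup.mk_surjective (α h)
      change ηH (e (wmk G 0 g h)) = β ⟨ηG (wmk G 0 g h), _⟩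
      simp only [e, extSquareCongr_wmk hZG.subset hZH.subset α ha.symm hb.symm, hηH, hηG,
        ← commutatorElement_def, hαβ g h a b ha.symm hb.symm]
  have hker : ηG.ker = ηH.ker.map (e.symm : extSquare H 0 →* extSquare G 0) := by
    rw [← ηG.ker_codRestrict _ hηG_mem, ← MonoidHom.ker_comp_of_injective _ j hj, ← hcomm,
      MonoidHom.ker_comp_mulEquiv]
  exact ⟨(MulEquiv.subgroupCongr hker).trans (e.symm.subgroupMap ηH.ker).symm⟩
end

section
/- Let p be a prime and G a finite non-cyclic p-group. Then the exterior center of G is contained in the Frattini subgroup: Z^∧(G) ≤ Φ(G). -/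
/-!
If `g ∉ Φ(G)`, some maximal subgroup `M` misses `g`; since `G` is not cyclic, some maximal
subgroup `N` contains `g`. Maximal subgroups of a finite `p`-group are normal of index `p`, so
`M = ker α` and `N = ker β` for characters `α β : G → ℤ/p`. The alternating form
`(x, y) ↦ α x β y - β x α y` is a crossed pairing vanishing on the diagonal, hence factors
through `G ∧ G`. For `h ∉ N` it takes the value `α g β h ≠ 0` on `(g, h)`, so `g ∧ h ≠ 1`.
-/

namespace QTensor

variable {G : Type} [Group G] {A : Type*} [Group A]

structure IsCrossedPairing (f : G → G → A) : Prop where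
  mul_left : ∀ g g₁ h, f (g * g₁) h = f (g * g₁ * g⁻¹) (g * h * g⁻¹) * f g h
  mul_right : ∀ g h h₁, f g (h * h₁) = f g h * f (h * g * h⁻¹) (h * h₁ * h⁻¹)

def Gen.evalPairing (f : G → G → A) : Gen G → A
  | .t g h => f g h
  | .d _ => 1

namespace IsCrossedPairing

variable {f : G → G → A}

lemma apply_one_one (hf : IsCrossedPairing f) : f 1 1 = 1 := by
  simpa using hf.mul_left 1 1 1

lemma lift_eq_one_of_mem_rels (hf : IsCrossedPairing f) :
    ∀ r ∈ rels G 0, FreeGroup.lift (Gen.evalPairing f) r = 1 := by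
  have hT (g h : G) : FreeGroup.lift (Gen.evalPairing f) (T G g h) = f g h :=
    FreeGroup.lift_apply_of
  have hD (g : G) : FreeGroup.lift (Gen.evalPairing f) (D G g) = 1 := FreeGroup.lift_apply_of
  intro r hr
  simp only [rels, Set.mem_union, Set.mem_ofPred_eq] at hr
  obtain ((((((⟨g, g₁, h, rfl⟩ | ⟨g, h, h₁, rfl⟩) | ⟨g, g₁, h₁, rfl⟩) | ⟨g, g₁, rfl⟩) |
      ⟨g, g₁, rfl⟩) | ⟨g, h, rfl⟩) | ⟨-, g, rfl⟩) := hr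
  · rw [map_mul, map_inv, map_mul, hT, hT, hT, hf.mul_left, mul_inv_cancel]
  · rw [map_mul, map_inv, map_mul, hT, hT, hT, hf.mul_right, mul_inv_cancel]
  · simp [hT, hD]
  · simp [relProd, hD]
  · simp [hT, hD, hf.apply_one_one]
  · simp [hD]
  · exact hD g

def tensorLift (hf : IsCrossedPairing f) : tensorSquare G 0 →* A :=
  PresentedGroup.toGroup hf.lift_eq_one_of_mem_rels

@[simp]
lemma tensorLift_tmk (hf : IsCrossedPairing f) (g h : G) :
    hf.tensorLift (tmk G 0 g h) = f g h :=
  PresentedGroup.toGroup.of hf.lift_eq_one_of_mem_rels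

def extLift (hf : IsCrossedPairing f) (hdiag : ∀ g, f g g = 1) : extSquare G 0 →* A :=
  QuotientGroup.lift (nabla G 0) hf.tensorLift <| Subgroup.normalClosure_le_normal <| by
    rintro _ ⟨g, rfl⟩
    simp [hdiag]

@[simp]
lemma extLift_wmk (hf : IsCrossedPairing f) (hdiag : ∀ g, f g g = 1) (g h : G) :
    hf.extLift hdiag (wmk G 0 g h) = f g h :=
  hf.tensorLift_tmk g h

lemma apply_eq_one_of_mem_Zext (hf : IsCrossedPairing f) (hdiag : ∀ g, f g g = 1) {g : G}
    (hg : g ∈ Zext G 0) (h : G) : f g h = 1 := by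
  rw [← hf.extLift_wmk hdiag, hg h, map_one]

end IsCrossedPairing

section Wedge

variable {R : Type*} [CommRing R] (α β : G →* Multiplicative R)

def wedgePairing (g h : G) : Multiplicative R :=
  .ofAdd ((α g).toAdd * (β h).toAdd - (β g).toAdd * (α h).toAdd)

lemma isCrossedPairing_wedgePairing : IsCrossedPairing (wedgePairing α β) := by
  constructor <;> intros <;>
    simp only [wedgePairing, map_mul, map_inv, mul_inv_cancel_comm, ← ofAdd_add, toAdd_mul] <;>
    ring_nf

lemma wedgePairing_self (g : G) : wedgePairing α β g g = 1 := by
  simp [wedgePairing, mul_comm]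

lemma mul_eq_mul_of_mem_Zext {g : G} (hg : g ∈ Zext G 0) (h : G) :
    (α g).toAdd * (β h).toAdd = (β g).toAdd * (α h).toAdd := by
  have := (isCrossedPairing_wedgePairing α β).apply_eq_one_of_mem_Zext
    (wedgePairing_self α β) hg h
  rwa [wedgePairing, ofAdd_eq_one, sub_eq_zero] at this

end Wedge

end QTensor

section MaximalSubgroup

variable {G : Type*} [Group G]

lemma isSimpleOrder_subgroup_quotient_of_isCoatom {M : Subgroup G} [M.Normal] (hM : IsCoatom M) :
    IsSimpleOrder (Subgroup (G ⧸ M)) :=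
  (OrderIso.isSimpleOrder_iff (β := Set.Ici M) (QuotientGroup.comapMk'OrderIso M)).mpr
    (Set.isSimpleOrder_Ici_iff_isCoatom.mpr hM)

lemma IsPGroup.card_eq_of_isSimpleOrder {p : ℕ} [Fact p.Prime] [Finite G] (hG : IsPGroup p G)
    [IsSimpleOrder (Subgroup G)] : Nat.card G = p := by
  have : Nontrivial G := Subgroup.nontrivial_iff.mp inferInstance
  obtain ⟨x, hx⟩ := exists_prime_orderOf_dvd_card' p
    (hG.card_eq_or_dvd.resolve_left Finite.one_lt_card.ne')
  have hx1 : x ≠ 1 := by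
    rintro rfl
    exact (Fact.out : p.Prime).one_lt.ne' (hx ▸ orderOf_one)
  have hgen : Subgroup.zpowers x = ⊤ :=
    (IsSimpleOrder.eq_bot_or_eq_top _).resolve_left (Subgroup.zpowers_eq_bot.not.mpr hx1)
  rw [← hx, ← Nat.card_zpowers, hgen, Subgroup.card_top]

lemma IsPGroup.exists_ker_eq_of_isCoatom {p : ℕ} [Fact p.Prime] [Finite G] (hG : IsPGroup p G)
    {M : Subgroup G} (hM : IsCoatom M) : ∃ α : G →* Multiplicative (ZMod p), α.ker = M := by
  have hcoatom_normal : Group.IsNilpotent G ↔ ∀ H : Subgroup G, IsCoatom H → H.Normal :=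
    Group.isNilpotent_of_finite_tfae.out 0 2
  have : M.Normal := hcoatom_normal.mp hG.isNilpotent M hM
  have := isSimpleOrder_subgroup_quotient_of_isCoatom hM
  let e : G ⧸ M ≃* Multiplicative (ZMod p) :=
    mulEquivOfPrimeCardEq (hG.to_quotient M).card_eq_of_isSimpleOrder (by simp)
  refine ⟨e.toMonoidHom.comp (QuotientGroup.mk' M), ?_⟩
  ext x
  simp

end MaximalSubgroup

open QTensor in
/-- For a finite non-cyclic `p`-group `G`, the exterior center is contained in the
Frattini subgroup: `Z^∧(G) ≤ Φ(G)`. -/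
theorem zext_le_frattini (p : ℕ) (hp : p.Prime) (G : Type) [Group G] [Finite G]
    (hG : IsPGroup p G) (hnc : ¬ IsCyclic G) :
    Zext G 0 ⊆ (frattini G : Set G) := by
  have : Fact p.Prime := ⟨hp⟩
  intro g hg
  by_contra hgΦ
  obtain ⟨M, hM, hgM⟩ : ∃ M : Subgroup G, IsCoatom M ∧ g ∉ M := by
    simpa [frattini, Order.radical] using hgΦ
  obtain ⟨N, hN, hgN⟩ : ∃ N : Subgroup G, IsCoatom N ∧ Subgroup.zpowers g ≤ N :=
    (eq_top_or_exists_le_coatom _).resolve_left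
      fun h => hnc (isCyclic_iff_exists_zpowers_eq_top.mpr ⟨g, h⟩)
  obtain ⟨h, hhN⟩ := SetLike.exists_not_mem_of_ne_top N hN.1
  obtain ⟨α, rfl⟩ := hG.exists_ker_eq_of_isCoatom hM
  obtain ⟨β, rfl⟩ := hG.exists_ker_eq_of_isCoatom hN
  have hβg : β g = 1 := hgN (Subgroup.mem_zpowers g)
  have key := mul_eq_mul_of_mem_Zext α β hg h
  rw [hβg, toAdd_one, zero_mul] at key
  exact mul_ne_zero (toAdd_eq_zero.not.mpr hgM) (toAdd_eq_zero.not.mpr hhN) key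
end
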